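/- On the path graph P_n, define the odd greedy step of a configuration D as the configuration MD where M = {(i,i+1) : i odd, D(i) > D(i+1)}, and the even greedy step as M'D where M' = {(i,i+1) : i even, D(i) > D(i+1)}. Suppose C is obtained from some configuration by an odd greedy step (resp. an even greedy step). Then for every token t: every prefix [1,j] attaining the maximum in Φ^-_C(t) has j even (resp. odd), and every suffix [j,n] attaining the maximum in Φ^+_C(t) has j odd (resp. even). -/
import Mathlib


/-- `φ⁻(t, Q)` for the prefix `Q = [1, j]`: the number of vertices `i' ≤ j` whose token
must cross `t`, i.e. with `C(i') > t`. -/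
def phiM (n : ℕ) (C : Fin n → Fin n) (t j : Fin n) : ℕ :=
  (Finset.univ.filter fun i' : Fin n => i' ≤ j ∧ t < C i').card

/-- `ψ⁻(t, Q)` for the prefix `Q = [1, j]` and position `i` of `t`: the number of vertices
`i'` with `j < i' < i` whose token need not cross `t`, i.e. with `C(i') < t`. -/
def psiM (n : ℕ) (C : Fin n → Fin n) (t i j : Fin n) : ℕ :=
  (Finset.univ.filter fun i' : Fin n => j < i' ∧ i' < i ∧ C i' < t).card

/-- The prefixes for token `t` at position `i`: endpoints `j < i` such that some vertex
`i' ≤ j` carries a token with `C(i') > t`. -/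
def prefixSet (n : ℕ) (C : Fin n → Fin n) (t i : Fin n) : Finset (Fin n) :=
  Finset.univ.filter fun j : Fin n => j < i ∧ ∃ i' ≤ j, t < C i'

/-- `Φ⁻_C(t)` (with `i` the position of `t`): the maximum of `φ⁻ + ψ⁻` over all prefixes,
or `0` if no prefix exists. -/
def PhiM (n : ℕ) (C : Fin n → Fin n) (t i : Fin n) : ℕ :=
  (prefixSet n C t i).sup fun j => phiM n C t j + psiM n C t i j

/-- `φ⁺(t, Q)` for the suffix `Q = [j, n]`. -/
def phiP (n : ℕ) (C : Fin n → Fin n) (t j : Fin n) : ℕ :=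
  (Finset.univ.filter fun i' : Fin n => j ≤ i' ∧ C i' < t).card

/-- `ψ⁺(t, Q)` for the suffix `Q = [j, n]` and position `i` of `t`. -/
def psiP (n : ℕ) (C : Fin n → Fin n) (t i j : Fin n) : ℕ :=
  (Finset.univ.filter fun i' : Fin n => i < i' ∧ i' < j ∧ t < C i').card

/-- The suffixes for token `t` at position `i`: startpoints `j > i` such that some vertex
`i' ≥ j` carries a token with `C(i') < t`. -/
def suffixSet (n : ℕ) (C : Fin n → Fin n) (t i : Fin n) : Finset (Fin n) :=
  Finset.univ.filter fun j : Fin n => i < j ∧ ∃ i', j ≤ i' ∧ C i' < t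

/-- `Φ⁺_C(t)` (with `i` the position of `t`): the maximum of `φ⁺ + ψ⁺` over all suffixes,
or `0` if no suffix exists. -/
def PhiP (n : ℕ) (C : Fin n → Fin n) (t i : Fin n) : ℕ :=
  (suffixSet n C t i).sup fun j => phiP n C t j + psiP n C t i j

/-- The potential `Φ_C(t) = Φ⁻_C(t) + Φ⁺_C(t)` of token `t` at position `i = C⁻¹(t)`. -/
def Phi (n : ℕ) (C : Fin n → Fin n) (t i : Fin n) : ℕ :=
  PhiM n C t i + PhiP n C t i

/-- The greedy step with parity `p ∈ {0, 1}` on the path `P_n` (0-indexed): simultaneously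
swap the tokens on every edge `(v, v+1)` with `v ≡ p (mod 2)` whose tokens are out of
order (`D v > D (v+1)`).  With 1-indexed vertices as in the paper, `p = 0` is the *odd*
greedy step and `p = 1` is the *even* greedy step. -/
def greedyStep (n p : ℕ) (D : Fin n → Fin n) : Fin n → Fin n := fun v =>
  if v.val % 2 = p then
    if h : v.val + 1 < n then
      if D ⟨v.val + 1, h⟩ < D v then D ⟨v.val + 1, h⟩ else D v
    else D v
  else
    if 1 ≤ v.val then
      if D v < D ⟨v.val - 1, lt_of_le_of_lt (Nat.sub_le _ _) v.isLt⟩ then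
        D ⟨v.val - 1, lt_of_le_of_lt (Nat.sub_le _ _) v.isLt⟩
      else D v
    else D v

lemma greedy_sorted (n p : ℕ) (D : Fin n ≃ Fin n) (v : Fin n)
    (hv : v.val % 2 = p) (h : v.val + 1 < n) :
    greedyStep n p ⇑D v < greedyStep n p ⇑D ⟨v.val + 1, h⟩ := by
  have hne : D ⟨v.val + 1, h⟩ ≠ D v := by
    intro he
    have := D.injective he
    rw [Fin.ext_iff] at this
    simp at this
  have hv2 : ¬ ((⟨v.val + 1, h⟩ : Fin n).val % 2 = p) := by simp; omega
  unfold greedyStep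
  rw [if_pos hv, dif_pos h, if_neg hv2, if_pos (by simp : 1 ≤ (⟨v.val + 1, h⟩ : Fin n).val)]
  simp only [Nat.add_sub_cancel, Fin.eta]
  rcases lt_or_gt_of_ne hne with hlt | hgt
  · rw [if_pos hlt, if_pos hlt]; exact hlt
  · rw [if_neg (not_lt.mpr hgt.le), if_neg (not_lt.mpr hgt.le)]; exact hgt

lemma sup_contra {n : ℕ} {s : Finset (Fin n)} {f : Fin n → ℕ} {j j' : Fin n}
    (hj' : j' ∈ s) (h : f j < f j') (heq : f j = s.sup f) : False := by
  have := Finset.le_sup (f := f) hj'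
  omega

/-- suppose the configuration `C` is obtained from some configuration by an
odd greedy step (`p = 0`) (resp. an even greedy step, `p = 1`).  Then for every token `t`
(at position `i`): every prefix attaining the maximum in `Φ⁻_C(t)` ends at a vertex `j`
with `j ≢ p (mod 2)` (1-indexed: on an even (resp. odd) vertex), and every suffix attaining
the maximum in `Φ⁺_C(t)` starts at a vertex `j` with `j ≡ p (mod 2)` (1-indexed: on an odd
(resp. even) vertex). -/
theorem stmt_11 (n p : ℕ) (hp : p < 2) (D : Fin n ≃ Fin n)
    (C : Fin n → Fin n) (hC : C = greedyStep n p ⇑D) (t i : Fin n) (hti : C i = t) :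
    (∀ j ∈ prefixSet n C t i,
        phiM n C t j + psiM n C t i j = PhiM n C t i → j.val % 2 ≠ p) ∧
    (∀ j ∈ suffixSet n C t i,
        phiP n C t j + psiP n C t i j = PhiP n C t i → j.val % 2 = p) := by
  constructor
  · intro j hj heq hjp
    simp only [prefixSet, Finset.mem_filter, Finset.mem_univ, true_and] at hj
    obtain ⟨hji, i', hi'j, hi't⟩ := hj
    have hjiv : j.val < i.val := hji
    have hi'jv : i'.val ≤ j.val := hi'j
    unfold PhiM at heq
    by_cases ha : C j < t
    · -- case A: move the prefix endpoint left
      have hij' : i'.val ≠ j.val := by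
        intro h
        rw [Fin.ext h] at hi't
        exact lt_asymm ha hi't
      have hj1 : 1 ≤ j.val := by omega
      obtain ⟨j', hj'v⟩ : ∃ j' : Fin n, j'.val = j.val - 1 :=
        ⟨⟨j.val - 1, lt_of_le_of_lt (Nat.sub_le _ _) j.isLt⟩, rfl⟩
      have hj'mem : j' ∈ prefixSet n C t i := by
        simp only [prefixSet, Finset.mem_filter, Finset.mem_univ, true_and]
        exact ⟨Fin.lt_def.mpr (by omega), i', Fin.le_def.mpr (by omega), hi't⟩
      have h1 : phiM n C t j' = phiM n C t j := by
        unfold phiM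
        congr 1
        ext x
        simp only [Finset.mem_filter, Finset.mem_univ, true_and, Fin.le_def]
        constructor
        · rintro ⟨hx1, hx2⟩; exact ⟨by omega, hx2⟩
        · rintro ⟨hx1, hx2⟩
          refine ⟨?_, hx2⟩
          have hxj : x.val ≠ j.val := by
            intro h
            rw [Fin.ext h] at hx2
            exact lt_asymm ha hx2
          omega
      have h2 : psiM n C t i j' = psiM n C t i j + 1 := by
        unfold psiM
        have hset : (Finset.univ.filter fun x : Fin n => j' < x ∧ x < i ∧ C x < t)
            = insert j (Finset.univ.filter fun x : Fin n => j < x ∧ x < i ∧ C x < t) := by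
          ext x
          simp only [Finset.mem_insert, Finset.mem_filter, Finset.mem_univ, true_and,
            Fin.lt_def]
          constructor
          · rintro ⟨hx1, hx2, hx3⟩
            rcases Nat.lt_or_ge j.val x.val with hlt | hge
            · exact Or.inr ⟨hlt, hx2, hx3⟩
            · exact Or.inl (Fin.ext (by omega : x.val = j.val))
          · rintro (rfl | ⟨hx1, hx2, hx3⟩)
            · exact ⟨by omega, hjiv, ha⟩
            · exact ⟨by omega, hx2, hx3⟩
        rw [hset, Finset.card_insert_of_notMem]
        simp only [Finset.mem_filter, Finset.mem_univ, true_and, not_and]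
        intro h
        exact absurd h (lt_irrefl j)
      exact sup_contra (f := fun k => phiM n C t k + psiM n C t i k) hj'mem
        (show phiM n C t j + psiM n C t i j < phiM n C t j' + psiM n C t i j' by omega) heq
    · -- case B: move the prefix endpoint right
      have hjn : j.val + 1 < n := lt_of_le_of_lt hjiv i.isLt
      obtain ⟨j', hj'v⟩ : ∃ j' : Fin n, j'.val = j.val + 1 := ⟨⟨j.val + 1, hjn⟩, rfl⟩
      have hb : C j < C j' := by
        rw [hC]
        have : j' = ⟨j.val + 1, hjn⟩ := Fin.ext hj'v
        rw [this]
        exact greedy_sorted n p D j hjp hjn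
      have htb : t < C j' := lt_of_le_of_lt (not_lt.mp ha) hb
      have hj'i : j'.val < i.val := by
        have hne : j'.val ≠ i.val := by
          intro h
          rw [Fin.ext h, hti] at htb
          exact lt_irrefl _ htb
        omega
      have hj'mem : j' ∈ prefixSet n C t i := by
        simp only [prefixSet, Finset.mem_filter, Finset.mem_univ, true_and]
        exact ⟨Fin.lt_def.mpr hj'i, j', le_refl _, htb⟩
      have h1 : phiM n C t j' = phiM n C t j + 1 := by
        unfold phiM
        have hset : (Finset.univ.filter fun x : Fin n => x ≤ j' ∧ t < C x)
            = insert j' (Finset.univ.filter fun x : Fin n => x ≤ j ∧ t < C x) := by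
          ext x
          simp only [Finset.mem_insert, Finset.mem_filter, Finset.mem_univ, true_and,
            Fin.le_def]
          constructor
          · rintro ⟨hx1, hx2⟩
            rcases Nat.lt_or_ge j.val x.val with hlt | hge
            · exact Or.inl (Fin.ext (by omega : x.val = j'.val))
            · exact Or.inr ⟨hge, hx2⟩
          · rintro (rfl | ⟨hx1, hx2⟩)
            · exact ⟨le_refl _, htb⟩
            · exact ⟨by omega, hx2⟩
        rw [hset, Finset.card_insert_of_notMem]
        simp only [Finset.mem_filter, Finset.mem_univ, true_and, Fin.le_def, not_and]
        intro h
        omega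
      have h2 : psiM n C t i j' = psiM n C t i j := by
        unfold psiM
        congr 1
        ext x
        simp only [Finset.mem_filter, Finset.mem_univ, true_and, Fin.lt_def]
        constructor
        · rintro ⟨hx1, hx2, hx3⟩; exact ⟨by omega, hx2, hx3⟩
        · rintro ⟨hx1, hx2, hx3⟩
          refine ⟨?_, hx2, hx3⟩
          have hxj : x.val ≠ j'.val := by
            intro h
            rw [Fin.ext h] at hx3
            exact lt_asymm htb hx3
          omega
      exact sup_contra (f := fun k => phiM n C t k + psiM n C t i k) hj'mem
        (show phiM n C t j + psiM n C t i j < phiM n C t j' + psiM n C t i j' by omega) heq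
  · intro j hj heq
    by_contra hjp
    simp only [suffixSet, Finset.mem_filter, Finset.mem_univ, true_and] at hj
    obtain ⟨hij, i', hji', hi't⟩ := hj
    have hijv : i.val < j.val := hij
    have hji'v : j.val ≤ i'.val := hji'
    have hj1 : 1 ≤ j.val := by omega
    unfold PhiP at heq
    by_cases hb : t < C j
    · -- case A: move the suffix startpoint right
      have hij' : i'.val ≠ j.val := by
        intro h
        rw [Fin.ext h] at hi't
        exact lt_asymm hb hi't
      have hjn : j.val + 1 < n := by have := i'.isLt; omega
      obtain ⟨j', hj'v⟩ : ∃ j' : Fin n, j'.val = j.val + 1 := ⟨⟨j.val + 1, hjn⟩, rfl⟩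
      have hj'mem : j' ∈ suffixSet n C t i := by
        simp only [suffixSet, Finset.mem_filter, Finset.mem_univ, true_and]
        exact ⟨Fin.lt_def.mpr (by omega), i', Fin.le_def.mpr (by omega), hi't⟩
      have h1 : phiP n C t j' = phiP n C t j := by
        unfold phiP
        congr 1
        ext x
        simp only [Finset.mem_filter, Finset.mem_univ, true_and, Fin.le_def]
        constructor
        · rintro ⟨hx1, hx2⟩; exact ⟨by omega, hx2⟩
        · rintro ⟨hx1, hx2⟩
          refine ⟨?_, hx2⟩
          have hxj : x.val ≠ j.val := by
            intro h
            rw [Fin.ext h] at hx2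
            exact lt_asymm hb hx2
          omega
      have h2 : psiP n C t i j' = psiP n C t i j + 1 := by
        unfold psiP
        have hset : (Finset.univ.filter fun x : Fin n => i < x ∧ x < j' ∧ t < C x)
            = insert j (Finset.univ.filter fun x : Fin n => i < x ∧ x < j ∧ t < C x) := by
          ext x
          simp only [Finset.mem_insert, Finset.mem_filter, Finset.mem_univ, true_and,
            Fin.lt_def]
          constructor
          · rintro ⟨hx1, hx2, hx3⟩
            rcases Nat.lt_or_ge x.val j.val with hlt | hge
            · exact Or.inr ⟨hx1, hlt, hx3⟩
            · exact Or.inl (Fin.ext (by omega : x.val = j.val))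
          · rintro (rfl | ⟨hx1, hx2, hx3⟩)
            · exact ⟨hijv, by omega, hb⟩
            · exact ⟨hx1, by omega, hx3⟩
        rw [hset, Finset.card_insert_of_notMem]
        simp only [Finset.mem_filter, Finset.mem_univ, true_and, Fin.lt_def, not_and]
        intro h
        omega
      exact sup_contra (f := fun k => phiP n C t k + psiP n C t i k) hj'mem
        (show phiP n C t j + psiP n C t i j < phiP n C t j' + psiP n C t i j' by omega) heq
    · -- case B: move the suffix startpoint left
      obtain ⟨jm, hjmv⟩ : ∃ jm : Fin n, jm.val = j.val - 1 :=
        ⟨⟨j.val - 1, lt_of_le_of_lt (Nat.sub_le _ _) j.isLt⟩, rfl⟩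
      have hjmp : jm.val % 2 = p := by omega
      have hjmn : jm.val + 1 < n := by have := j.isLt; omega
      have hjmj : (⟨jm.val + 1, hjmn⟩ : Fin n) = j := Fin.ext (by simp; omega)
      have hab : C jm < C j := by
        rw [hC, ← hjmj]
        exact greedy_sorted n p D jm hjmp hjmn
      have hat : C jm < t := lt_of_lt_of_le hab (not_lt.mp hb)
      have hjmi : i.val < jm.val := by
        have hne : jm.val ≠ i.val := by
          intro h
          rw [Fin.ext h, hti] at hat
          exact lt_irrefl _ hat
        omega
      have hjmmem : jm ∈ suffixSet n C t i := by
        simp only [suffixSet, Finset.mem_filter, Finset.mem_univ, true_and]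
        exact ⟨Fin.lt_def.mpr hjmi, jm, le_refl _, hat⟩
      have h1 : phiP n C t jm = phiP n C t j + 1 := by
        unfold phiP
        have hset : (Finset.univ.filter fun x : Fin n => jm ≤ x ∧ C x < t)
            = insert jm (Finset.univ.filter fun x : Fin n => j ≤ x ∧ C x < t) := by
          ext x
          simp only [Finset.mem_insert, Finset.mem_filter, Finset.mem_univ, true_and,
            Fin.le_def]
          constructor
          · rintro ⟨hx1, hx2⟩
            rcases Nat.lt_or_ge x.val j.val with hlt | hge
            · exact Or.inl (Fin.ext (by omega : x.val = jm.val))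
            · exact Or.inr ⟨hge, hx2⟩
          · rintro (rfl | ⟨hx1, hx2⟩)
            · exact ⟨le_refl _, hat⟩
            · exact ⟨by omega, hx2⟩
        rw [hset, Finset.card_insert_of_notMem]
        simp only [Finset.mem_filter, Finset.mem_univ, true_and, Fin.le_def, not_and]
        intro h
        omega
      have h2 : psiP n C t i jm = psiP n C t i j := by
        unfold psiP
        congr 1
        ext x
        simp only [Finset.mem_filter, Finset.mem_univ, true_and, Fin.lt_def]
        constructor
        · rintro ⟨hx1, hx2, hx3⟩; exact ⟨hx1, by omega, hx3⟩
        · rintro ⟨hx1, hx2, hx3⟩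
          refine ⟨hx1, ?_, hx3⟩
          have hxj : x.val ≠ jm.val := by
            intro h
            rw [Fin.ext h] at hx3
            exact lt_asymm hat hx3
          omega
      exact sup_contra (f := fun k => phiP n C t k + psiP n C t i k) hjmmem
        (show phiP n C t j + psiP n C t i j < phiP n C t jm + psiP n C t i jm by omega) heq
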